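/- Let U ⊆ ℂ be open, f : U → ℂ real analytic (smooth suffices), κ ∈ ℕ with κ ≥ 1, and for ε > 0 let ∂D_ε denote the positively oriented circle of radius ε around 0. Then lim_{ε→0} ∫_{∂D_ε} f(z)/z^κ dz̄ = 0. -/

import Mathlib

open Complex Real MeasureTheory intervalIntegral Filter Set

noncomputable def AInt (g : ℂ → ℂ) (l : ℤ) (ε : ℝ) : ℂ :=
  ∫ θ in (0:ℝ)..(2*π), g ((ε:ℂ) * Complex.exp (θ * Complex.I)) * Complex.exp (-(l:ℂ) * θ * Complex.I)

lemma hasDerivAt_cexp_real (c : ℂ) (θ : ℝ) :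
    HasDerivAt (fun t : ℝ => Complex.exp (c * t)) (c * Complex.exp (c * θ)) θ := by
  have h2 : HasDerivAt (fun z : ℂ => c * z) c (θ:ℂ) := by
    simpa using (hasDerivAt_id (θ:ℂ)).const_mul c
  have h1 : HasDerivAt (fun z : ℂ => Complex.exp (c * z)) (c * Complex.exp (c * θ)) (θ:ℂ) := by
    exact ((Complex.hasDerivAt_exp (c * θ)).comp (θ:ℂ) h2).congr_deriv (mul_comm _ _)
  exact h1.comp_ofReal

lemma norm_circle (ε θ : ℝ) (hε : 0 ≤ ε) : ‖(ε:ℂ) * Complex.exp (↑θ * Complex.I)‖ = ε := by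
  simp [map_mul, Complex.norm_exp, _root_.abs_of_nonneg hε]

lemma intExp (l : ℤ) (hl : l ≠ 0) :
    ∫ θ in (0:ℝ)..(2*π), Complex.exp (-(l:ℂ) * θ * Complex.I) = 0 := by
  have hc : (-(l:ℂ) * Complex.I) ≠ 0 := by
    simp [Complex.I_ne_zero, Int.cast_ne_zero, hl]
  have h : ∀ θ : ℝ, -(l:ℂ) * θ * Complex.I = (-(l:ℂ) * Complex.I) * θ := fun θ => by ring
  rw [intervalIntegral.integral_congr (g := fun θ:ℝ => Complex.exp ((-(l:ℂ) * Complex.I) * θ))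
    (fun θ _ => by rw [h])]
  rw [integral_exp_mul_complex hc]
  have h1 : (-(l:ℂ) * Complex.I) * ((2*π:ℝ):ℂ) = ((-l : ℤ):ℂ) * (2 * ↑π * Complex.I) := by
    push_cast; ring
  have h2 : (-(l:ℂ) * Complex.I) * ((0:ℝ):ℂ) = 0 := by push_cast; ring
  rw [h1, h2, Complex.exp_int_mul_two_pi_mul_I, Complex.exp_zero, sub_self, zero_div]

lemma alg (L : ℂ →L[ℝ] ℂ) (w : ℂ) :
    L w = w * ((L 1 - Complex.I * L Complex.I)/2)
      + (starRingEnd ℂ) w * ((L 1 + Complex.I * L Complex.I)/2) := by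
  have hw : w = w.re • (1:ℂ) + w.im • Complex.I := by
    simp [Complex.real_smul, Complex.re_add_im]
  have hcw : (starRingEnd ℂ) w = ↑w.re - ↑w.im * Complex.I := by
    simp [Complex.ext_iff]
  have key : ∀ (a b : ℝ) (A B : ℂ), a • A + b • B
      = (↑a + ↑b*Complex.I) * ((A - Complex.I*B)/2) + (↑a - ↑b*Complex.I) * ((A + Complex.I*B)/2) := by
    intro a b A B
    simp only [Complex.real_smul]
    ring_nf
    rw [Complex.I_sq]
    ring
  calc L w = L (w.re • (1:ℂ) + w.im • Complex.I) := by rw [← hw]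
    _ = w.re • L 1 + w.im • L Complex.I := by rw [map_add, L.map_smul, L.map_smul]
    _ = (↑w.re + ↑w.im*Complex.I) * ((L 1 - Complex.I * L Complex.I)/2)
        + (↑w.re - ↑w.im*Complex.I) * ((L 1 + Complex.I * L Complex.I)/2) := key _ _ _ _
    _ = w * ((L 1 - Complex.I * L Complex.I)/2)
        + (starRingEnd ℂ) w * ((L 1 + Complex.I * L Complex.I)/2) := by
        rw [Complex.re_add_im, ← hcw]

lemma baseCase (U : Set ℂ) (hU : IsOpen U) (h0 : (0:ℂ) ∈ U) (g : ℂ → ℂ)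
    (hg : ContinuousOn g U) (l : ℤ) (hl : l ≠ 0) :
    Tendsto (fun ε : ℝ => AInt g l ε) (nhdsWithin 0 (Set.Ioi 0)) (nhds 0) := by
  obtain ⟨δ, hδ, hδU⟩ := Metric.isOpen_iff.1 hU 0 h0
  rw [Metric.tendsto_nhdsWithin_nhds]
  intro η hη
  have hc : ContinuousAt g 0 := hg.continuousAt (hU.mem_nhds h0)
  obtain ⟨r, hr, hrη⟩ := Metric.continuousAt_iff.1 hc (η/7) (by linarith)
  refine ⟨min r δ, lt_min hr hδ, ?_⟩
  intro ε hε hεd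
  have hε0 : (0:ℝ) < ε := hε
  rw [Real.dist_eq, sub_zero, abs_of_pos hε0, lt_min_iff] at hεd
  have hmem : ∀ θ : ℝ, (ε:ℂ) * Complex.exp (↑θ * Complex.I) ∈ U := by
    intro θ
    apply hδU
    rw [Metric.mem_ball, dist_zero_right, norm_circle ε θ hε0.le]
    exact hεd.2
  have hcirc : Continuous fun θ:ℝ => (ε:ℂ) * Complex.exp (↑θ * Complex.I) := by fun_prop
  have hcont : ContinuousOn (fun θ : ℝ => g ((ε:ℂ) * Complex.exp (↑θ * Complex.I)))
      (Set.uIcc 0 (2*π)) := hg.comp hcirc.continuousOn (fun θ _ => hmem θ)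
  have hexpc : Continuous fun θ:ℝ => Complex.exp (-(l:ℂ) * θ * Complex.I) := by fun_prop
  have hint1 : IntervalIntegrable
      (fun θ:ℝ => g ((ε:ℂ) * Complex.exp (↑θ * Complex.I)) * Complex.exp (-(l:ℂ) * θ * Complex.I))
      volume 0 (2*π) := (hcont.mul hexpc.continuousOn).intervalIntegrable
  have hint2 : IntervalIntegrable
      (fun θ:ℝ => g 0 * Complex.exp (-(l:ℂ) * θ * Complex.I)) volume 0 (2*π) :=
    Continuous.intervalIntegrable (by fun_prop) _ _
  have hkey : AInt g l ε = ∫ θ in (0:ℝ)..(2*π),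
      (g ((ε:ℂ) * Complex.exp (↑θ * Complex.I)) - g 0) * Complex.exp (-(l:ℂ) * θ * Complex.I) := by
    rw [show (fun θ:ℝ => (g ((ε:ℂ) * Complex.exp (↑θ * Complex.I)) - g 0)
        * Complex.exp (-(l:ℂ) * θ * Complex.I))
      = fun θ:ℝ => g ((ε:ℂ) * Complex.exp (↑θ * Complex.I)) * Complex.exp (-(l:ℂ) * θ * Complex.I)
        - g 0 * Complex.exp (-(l:ℂ) * θ * Complex.I) from funext fun θ => by ring]
    rw [intervalIntegral.integral_sub hint1 hint2, intervalIntegral.integral_const_mul,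
      intExp l hl, mul_zero, sub_zero]
    rfl
  rw [dist_eq_norm, sub_zero, hkey]
  have hbound : ‖∫ θ in (0:ℝ)..(2*π),
      (g ((ε:ℂ) * Complex.exp (↑θ * Complex.I)) - g 0) * Complex.exp (-(l:ℂ) * θ * Complex.I)‖
      ≤ (η/7) * |2*π - 0| := by
    apply intervalIntegral.norm_integral_le_of_norm_le_const
    intro θ _
    rw [norm_mul]
    have h1 : ‖Complex.exp (-(l:ℂ) * θ * Complex.I)‖ = 1 := by
      rw [Complex.norm_exp]
      norm_num [Complex.mul_I_re]
    rw [h1, mul_one]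
    have h2 : dist ((ε:ℂ) * Complex.exp (↑θ * Complex.I)) 0 < r := by
      rw [dist_zero_right, norm_circle ε θ hε0.le]; exact hεd.1
    exact le_of_lt (by simpa [dist_eq_norm] using hrη h2)
  have hπ : |2*π - 0| = 2*π := by
    rw [sub_zero, abs_of_pos (by positivity)]
  rw [hπ] at hbound
  have : (η/7) * (2*π) < η := by nlinarith [Real.pi_lt_d2]
  linarith

lemma ibpStep (g : ℂ → ℂ) (l : ℤ) (hl0 : (l:ℂ) ≠ 0) (ε : ℝ)
    (hdiff : ∀ θ:ℝ, HasFDerivAt g (fderiv ℝ g ((ε:ℂ)*Complex.exp (↑θ*Complex.I)))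
      ((ε:ℂ)*Complex.exp (↑θ*Complex.I)))
    (hpc : ContinuousOn (fun θ:ℝ => fderiv ℝ g ((ε:ℂ)*Complex.exp (↑θ*Complex.I)) 1)
      (Set.uIcc 0 (2*π)))
    (hqc : ContinuousOn (fun θ:ℝ => fderiv ℝ g ((ε:ℂ)*Complex.exp (↑θ*Complex.I)) Complex.I)
      (Set.uIcc 0 (2*π))) :
    AInt g l ε = ((ε:ℂ)/l) * AInt (fun z => (fderiv ℝ g z 1 - Complex.I * fderiv ℝ g z Complex.I)/2) (l-1) ε
               - ((ε:ℂ)/l) * AInt (fun z => (fderiv ℝ g z 1 + Complex.I * fderiv ℝ g z Complex.I)/2) (l+1) ε := by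
  set p : ℂ → ℂ := fun z => (fderiv ℝ g z 1 - Complex.I * fderiv ℝ g z Complex.I)/2 with hpdef
  set q : ℂ → ℂ := fun z => (fderiv ℝ g z 1 + Complex.I * fderiv ℝ g z Complex.I)/2 with hqdef
  set z : ℝ → ℂ := fun θ => (ε:ℂ)*Complex.exp (↑θ*Complex.I) with hzdef
  set W : ℝ → ℂ := fun θ => (ε:ℂ)*Complex.I*Complex.exp (↑θ*Complex.I) with hWdef
  set u : ℝ → ℂ := fun θ => g (z θ) with hudef
  set u' : ℝ → ℂ := fun θ => W θ * p (z θ) + (starRingEnd ℂ) (W θ) * q (z θ) with hu'def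
  set v : ℝ → ℂ := fun θ => Complex.exp (-(l:ℂ)*θ*Complex.I) * (Complex.I/(l:ℂ)) with hvdef
  set v' : ℝ → ℂ := fun θ => Complex.exp (-(l:ℂ)*θ*Complex.I) with hv'def
  have hzd : ∀ θ:ℝ, HasDerivAt z (W θ) θ := by
    intro θ
    have h := (hasDerivAt_cexp_real Complex.I θ).const_mul (ε:ℂ)
    simp only [show ∀ t:ℝ, Complex.I*(t:ℂ) = ↑t*Complex.I from fun t => mul_comm _ _] at h
    simpa [hWdef, mul_assoc] using h
  have hu : ∀ θ ∈ Set.uIcc (0:ℝ) (2*π), HasDerivAt u (u' θ) θ := by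
    intro θ _
    have h := (hdiff θ).comp_hasDerivAt θ (hzd θ)
    have halg := alg (fderiv ℝ g (z θ)) (W θ)
    have : u' θ = fderiv ℝ g (z θ) (W θ) := by rw [hu'def]; rw [halg]
    rw [this]
    exact h
  have hv : ∀ θ ∈ Set.uIcc (0:ℝ) (2*π), HasDerivAt v (v' θ) θ := by
    intro θ _
    have h := (hasDerivAt_cexp_real (-(l:ℂ)*Complex.I) θ).mul_const (Complex.I/(l:ℂ))
    simp only [show ∀ t:ℝ, -(l:ℂ)*Complex.I*(t:ℂ) = -(l:ℂ)*t*Complex.I from fun t => by ring] at h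
    refine h.congr_deriv ?_
    rw [hv'def]
    field_simp
    ring_nf
    rw [Complex.I_sq]
    ring
  have hWc : Continuous W := by fun_prop
  have hcWc : Continuous fun θ => (starRingEnd ℂ) (W θ) := by
    have hrfl : (fun θ => (starRingEnd ℂ) (W θ)) = fun θ => star (W θ) := rfl
    rw [hrfl]
    exact hWc.star
  have hpzc : ContinuousOn (fun θ:ℝ => p (z θ)) (Set.uIcc 0 (2*π)) :=
    ((hpc.sub (continuousOn_const.mul hqc)).div_const 2)
  have hqzc : ContinuousOn (fun θ:ℝ => q (z θ)) (Set.uIcc 0 (2*π)) :=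
    ((hpc.add (continuousOn_const.mul hqc)).div_const 2)
  have hu'int : IntervalIntegrable u' volume 0 (2*π) :=
    (((hWc.continuousOn.mul hpzc).add (hcWc.continuousOn.mul hqzc))).intervalIntegrable
  have hv'int : IntervalIntegrable v' volume 0 (2*π) :=
    Continuous.intervalIntegrable (by fun_prop) _ _
  have hibp := intervalIntegral.integral_mul_deriv_eq_deriv_mul hu hv hu'int hv'int
  have hA : AInt g l ε = ∫ θ in (0:ℝ)..(2*π), u θ * v' θ := rfl
  have hb : u (2*π) * v (2*π) - u 0 * v 0 = 0 := by
    have h1 : ((2*π:ℝ):ℂ) * Complex.I = 2*(π:ℂ)*Complex.I := by push_cast; ring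
    have h2 : Complex.exp (((2*π:ℝ):ℂ) * Complex.I) = 1 := by
      rw [h1]; exact Complex.exp_two_pi_mul_I
    have h3 : Complex.exp (-(l:ℂ) * ((2*π:ℝ):ℂ) * Complex.I) = 1 := by
      rw [show -(l:ℂ) * ((2*π:ℝ):ℂ) * Complex.I = ((-l:ℤ):ℂ) * (2*(π:ℂ)*Complex.I) by push_cast; ring]
      exact Complex.exp_int_mul_two_pi_mul_I (-l)
    have h3' : Complex.exp (-((l:ℂ) * (2*(π:ℂ)) * Complex.I)) = 1 := by
      rw [show -((l:ℂ) * (2*(π:ℂ)) * Complex.I) = ((-l:ℤ):ℂ)*(2*(π:ℂ)*Complex.I) by push_cast; ring]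
      exact Complex.exp_int_mul_two_pi_mul_I (-l)
    simp [hudef, hvdef, hzdef, h2]
    rw [h3']
    ring
  have hce : ∀ θ:ℝ, (starRingEnd ℂ) (Complex.exp (↑θ*Complex.I)) = Complex.exp (-(↑θ:ℂ)*Complex.I) := by
    intro θ
    rw [← Complex.exp_conj]
    congr 1
    simp
  have hrw : Set.EqOn (fun θ => u' θ * v θ)
      (fun θ => (-(ε:ℂ)/l) * (p (z θ) * Complex.exp (-((l-1:ℤ):ℂ)*θ*Complex.I))
        + ((ε:ℂ)/l) * (q (z θ) * Complex.exp (-((l+1:ℤ):ℂ)*θ*Complex.I))) (Set.uIcc 0 (2*π)) := by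
    intro θ _
    have e1 : Complex.exp (↑θ*Complex.I) * Complex.exp (-(l:ℂ)*θ*Complex.I)
        = Complex.exp (-((l-1:ℤ):ℂ)*θ*Complex.I) := by
      rw [← Complex.exp_add]; congr 1; push_cast; ring
    have e3 : Complex.exp (-(↑θ:ℂ)*Complex.I) * Complex.exp (-(l:ℂ)*θ*Complex.I)
        = Complex.exp (-((l+1:ℤ):ℂ)*θ*Complex.I) := by
      rw [← Complex.exp_add]; congr 1; push_cast; ring
    simp only [hu'def, hvdef, hWdef, map_mul, hce θ, Complex.conj_I, Complex.conj_ofReal]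
    rw [← e1, ← e3]
    field_simp
    ring_nf
    simp only [Complex.I_sq, show (Complex.I:ℂ)^3 = -Complex.I by rw [pow_succ, Complex.I_sq]; ring]
    ring
  have hintp : IntervalIntegrable
      (fun θ:ℝ => (-(ε:ℂ)/l) * (p (z θ) * Complex.exp (-((l-1:ℤ):ℂ)*θ*Complex.I))) volume 0 (2*π) :=
    (continuousOn_const.mul (hpzc.mul (Continuous.continuousOn (by fun_prop)))).intervalIntegrable
  have hintq : IntervalIntegrable
      (fun θ:ℝ => ((ε:ℂ)/l) * (q (z θ) * Complex.exp (-((l+1:ℤ):ℂ)*θ*Complex.I))) volume 0 (2*π) :=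
    (continuousOn_const.mul (hqzc.mul (Continuous.continuousOn (by fun_prop)))).intervalIntegrable
  have hres : ∫ θ in (0:ℝ)..(2*π), u' θ * v θ
      = (-(ε:ℂ)/l) * AInt p (l-1) ε + ((ε:ℂ)/l) * AInt q (l+1) ε := by
    rw [intervalIntegral.integral_congr hrw, intervalIntegral.integral_add hintp hintq,
      intervalIntegral.integral_const_mul, intervalIntegral.integral_const_mul]
    rfl
  rw [hA, hibp, hb, hres]
  ring

lemma keyLemma (U : Set ℂ) (hU : IsOpen U) (h0 : (0:ℂ) ∈ U) :
    ∀ (n : ℕ) (g : ℂ → ℂ), ContDiffOn ℝ n g U → ∀ l : ℤ, (n:ℤ) < |l| →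
    Tendsto (fun ε : ℝ => AInt g l ε / (ε:ℂ)^n) (nhdsWithin 0 (Set.Ioi 0)) (nhds 0) := by
  intro n
  induction n with
  | zero =>
    intro g hg l hl
    have hl0 : l ≠ 0 := by rcases abs_cases l with ⟨h,_⟩|⟨h,_⟩ <;> omega
    simpa using baseCase U hU h0 g hg.continuousOn l hl0
  | succ n IH =>
    intro g hg l hl
    obtain ⟨δ, hδ, hδU⟩ := Metric.isOpen_iff.1 hU 0 h0
    have hlne : l ≠ 0 := by rcases abs_cases l with ⟨h,_⟩|⟨h,_⟩ <;> omega
    have hl0 : (l:ℂ) ≠ 0 := Int.cast_ne_zero.2 hlne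
    have hfd : ContDiffOn ℝ n (fderiv ℝ g) U := hg.fderiv_of_isOpen hU (by norm_cast)
    have hp : ContDiffOn ℝ n
        (fun z => (fderiv ℝ g z 1 - Complex.I * fderiv ℝ g z Complex.I)/2) U :=
      ((hfd.clm_apply contDiffOn_const).sub
        (contDiffOn_const.mul (hfd.clm_apply contDiffOn_const))).div_const 2
    have hq : ContDiffOn ℝ n
        (fun z => (fderiv ℝ g z 1 + Complex.I * fderiv ℝ g z Complex.I)/2) U :=
      ((hfd.clm_apply contDiffOn_const).add
        (contDiffOn_const.mul (hfd.clm_apply contDiffOn_const))).div_const 2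
    have hTp := IH _ hp (l-1)
      (by rcases abs_cases l with ⟨h,h'⟩|⟨h,h'⟩ <;> rcases abs_cases (l-1) with ⟨h2,h2'⟩|⟨h2,h2'⟩ <;> omega)
    have hTq := IH _ hq (l+1)
      (by rcases abs_cases l with ⟨h,h'⟩|⟨h,h'⟩ <;> rcases abs_cases (l+1) with ⟨h2,h2'⟩|⟨h2,h2'⟩ <;> omega)
    have h2 : Tendsto (fun ε:ℝ =>
        ((1:ℂ)/l) * (AInt (fun z => (fderiv ℝ g z 1 - Complex.I * fderiv ℝ g z Complex.I)/2) (l-1) ε / (ε:ℂ)^n)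
        - ((1:ℂ)/l) * (AInt (fun z => (fderiv ℝ g z 1 + Complex.I * fderiv ℝ g z Complex.I)/2) (l+1) ε / (ε:ℂ)^n))
        (nhdsWithin 0 (Set.Ioi 0)) (nhds 0) := by
      have := (hTp.const_mul ((1:ℂ)/(l:ℂ))).sub (hTq.const_mul ((1:ℂ)/(l:ℂ)))
      simpa using this
    apply h2.congr'
    filter_upwards [Ioo_mem_nhdsGT_of_mem (Set.left_mem_Ico.2 hδ)] with ε hε
    have hε0 : (0:ℝ) < ε := hε.1
    have hεC : (ε:ℂ) ≠ 0 := by exact_mod_cast hε0.ne'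
    have hmem : ∀ θ:ℝ, (ε:ℂ)*Complex.exp (↑θ*Complex.I) ∈ U := by
      intro θ
      apply hδU
      rw [Metric.mem_ball, dist_zero_right, norm_circle ε θ hε0.le]
      exact hε.2
    have hdiffU : DifferentiableOn ℝ g U := hg.differentiableOn (by norm_cast)
    have hdiff : ∀ θ:ℝ, HasFDerivAt g (fderiv ℝ g ((ε:ℂ)*Complex.exp (↑θ*Complex.I)))
        ((ε:ℂ)*Complex.exp (↑θ*Complex.I)) := fun θ =>
      (hdiffU.differentiableAt (hU.mem_nhds (hmem θ))).hasFDerivAt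
    have hcirc : Continuous fun θ:ℝ => (ε:ℂ)*Complex.exp (↑θ*Complex.I) := by fun_prop
    have hfdz : ContinuousOn (fun θ:ℝ => fderiv ℝ g ((ε:ℂ)*Complex.exp (↑θ*Complex.I)))
        (Set.uIcc 0 (2*π)) :=
      (hfd.continuousOn).comp hcirc.continuousOn (fun θ _ => hmem θ)
    have hpc : ContinuousOn (fun θ:ℝ => fderiv ℝ g ((ε:ℂ)*Complex.exp (↑θ*Complex.I)) 1)
        (Set.uIcc 0 (2*π)) := hfdz.clm_apply continuousOn_const
    have hqc : ContinuousOn (fun θ:ℝ => fderiv ℝ g ((ε:ℂ)*Complex.exp (↑θ*Complex.I)) Complex.I)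
        (Set.uIcc 0 (2*π)) := hfdz.clm_apply continuousOn_const
    have hibp := ibpStep g l hl0 ε hdiff hpc hqc
    rw [hibp]
    field_simp
    ring


/-- For `f` smooth near `0` and `κ ≥ 1`, the integral of `f(z)/z^κ dz̄` over the
circle of radius `ε` around `0` (parametrized by `z = ε e^{iθ}`, so that
`dz̄ = -i ε e^{-iθ} dθ`) tends to `0` as `ε → 0⁺`. -/
theorem stmt_15 (f : ℂ → ℂ) (U : Set ℂ) (hU : IsOpen U) (h0 : (0 : ℂ) ∈ U)
    (hf : ContDiffOn ℝ (⊤ : ℕ∞) f U) (κ : ℕ) (hκ : 1 ≤ κ) :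
    Filter.Tendsto (fun ε : ℝ => ∫ θ in (0:ℝ)..(2 * Real.pi),
        f ((ε : ℂ) * Complex.exp (θ * Complex.I)) /
            ((ε : ℂ) * Complex.exp (θ * Complex.I)) ^ κ *
          (-Complex.I * (ε : ℂ) * Complex.exp (-θ * Complex.I)))
      (nhdsWithin 0 (Set.Ioi 0)) (nhds 0) := by
  obtain ⟨k, rfl⟩ : ∃ k, κ = k+1 := ⟨κ-1, by omega⟩
  have hkey := keyLemma U hU h0 k f (hf.of_le (mod_cast le_top)) ((k:ℤ)+2)
    (by rcases abs_cases ((k:ℤ)+2) with ⟨h,h'⟩|⟨h,h'⟩ <;> omega)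
  have h2 := hkey.const_mul (-Complex.I)
  rw [mul_zero] at h2
  apply h2.congr'
  filter_upwards [self_mem_nhdsWithin] with ε (hε : ε ∈ Set.Ioi (0:ℝ))
  have hε0 : (0:ℝ) < ε := hε
  have hεC : (ε:ℂ) ≠ 0 := by exact_mod_cast hε0.ne'
  have hstep : -Complex.I * (AInt f ((k:ℤ)+2) ε / (ε:ℂ)^k)
      = (-Complex.I/(ε:ℂ)^k) * AInt f ((k:ℤ)+2) ε := by ring
  rw [hstep]
  unfold AInt
  rw [← intervalIntegral.integral_const_mul]
  apply intervalIntegral.integral_congr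
  intro θ _
  simp only
  have hE : Complex.exp (↑θ*Complex.I) ≠ 0 := Complex.exp_ne_zero _
  have hE' : Complex.exp (((k+1:ℕ):ℂ)*(↑θ*Complex.I)) ≠ 0 := Complex.exp_ne_zero _
  have e1 : ((ε:ℂ)*Complex.exp (↑θ*Complex.I))^(k+1)
      = (ε:ℂ)^(k+1) * Complex.exp (((k+1:ℕ):ℂ)*(↑θ*Complex.I)) := by
    rw [mul_pow, ← Complex.exp_nat_mul]
  have e2 : Complex.exp (-(((k:ℤ)+2:ℤ):ℂ)*θ*Complex.I) * Complex.exp (((k+1:ℕ):ℂ)*(↑θ*Complex.I))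
      = Complex.exp (-↑θ*Complex.I) := by
    rw [← Complex.exp_add]; congr 1; push_cast; ring
  have e2' : Complex.exp (-(((k:ℤ)+2:ℤ):ℂ)*θ*Complex.I)
      = Complex.exp (-↑θ*Complex.I) * (Complex.exp (((k+1:ℕ):ℂ)*(↑θ*Complex.I)))⁻¹ := by
    rw [eq_comm, mul_comm, inv_mul_eq_iff_eq_mul₀ hE', eq_comm, mul_comm]
    exact e2
  rw [e1, e2']
  field_simp
  ring
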